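/- arXiv:0903.4910 — 6 statements merged into one kernel-verified Lean document; each statement's English description precedes it below -/
import Mathlib

section
/- Let k and s be natural numbers with s ≥ 0, t > 0. The binomial coefficient C(k - 2^s(2^t - 1), 2^s) is odd if and only if k ≥ 2^{s+t} and 2^s does not appear in the binary expansion of k. (Here the binomial coefficient is taken to be 0 when k < 2^s(2^t-1).) -/
/-!
By Lucas' theorem, `C(n, 2^s)` is odd iff `⌊n / 2^s⌋` is odd. Writing `q = ⌊k / 2^s⌋` and
`c = 2^t - 1`, which is odd, we have `⌊(k - 2^s c) / 2^s⌋ = q - c`, and `q - c` is odd iff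
`c < q` (that is, `2^(s+t) ≤ k`) and `q` is even (that is, bit `s` of `k` is `0`).
-/

namespace Nat

theorem odd_choose_two_pow_iff (n s : ℕ) : Odd (n.choose (2 ^ s)) ↔ Odd (n / 2 ^ s) := by
  induction s generalizing n with
  | zero => simp
  | succ s ih =>
    have lucas : n.choose (2 ^ (s + 1)) ≡ (n / 2).choose (2 ^ s) [MOD 2] := by
      simpa [pow_succ] using Choose.choose_modEq_choose_mod_mul_choose_div_nat
        (n := n) (k := 2 ^ (s + 1)) (p := 2)
    rw [odd_iff, lucas, ← odd_iff, ih, Nat.div_div_eq_div_mul, ← pow_succ']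

theorem testBit_eq_false_iff_even_div_two_pow (n s : ℕ) :
    n.testBit s = false ↔ Even (n / 2 ^ s) := by
  simp [testBit_eq_decide_div_mod_eq, even_iff]

theorem odd_sub_iff_of_odd {q c : ℕ} (hc : Odd c) : Odd (q - c) ↔ c < q ∧ Even q := by
  rcases lt_or_ge c q with hlt | hle
  · rw [odd_sub hlt.le]
    simp [hlt, ← not_odd_iff_even, hc]
  · simp [Nat.sub_eq_zero_of_le hle, hle.not_gt]

end Nat

/-- For k, s, t with t > 0, the binomial coefficient
C(k - 2^s(2^t-1), 2^s) (zero when k < 2^s(2^t-1), as encoded by ℕ-subtraction)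
is odd iff k ≥ 2^{s+t} and the s-th binary digit of k is 0. -/
theorem stmt0 (k s t : ℕ) (ht : 0 < t) :
    Odd (Nat.choose (k - 2^s * (2^t - 1)) (2^s)) ↔
      (2^(s+t) ≤ k ∧ k.testBit s = false) := by
  have hc : Odd (2 ^ t - 1) := Nat.Even.sub_odd Nat.one_le_two_pow
    ((Nat.even_pow' ht.ne').mpr even_two) odd_one
  have hbound : 2 ^ (s + t) ≤ k ↔ 2 ^ t - 1 < k / 2 ^ s := by
    rw [pow_add, mul_comm, ← Nat.le_div_iff_mul_le (Nat.two_pow_pos s)]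
    have := Nat.two_pow_pos t
    omega
  rw [Nat.odd_choose_two_pow_iff, Nat.sub_mul_div, Nat.odd_sub_iff_of_odd hc, hbound,
    Nat.testBit_eq_false_iff_even_div_two_pow]
end

section
/- For natural numbers k, s, t with t > 0: setting b_k P_t^s := C(k - 2^s(2^t-1), 2^s) mod 2 times b_{k-2^s(2^t-1)}, the coefficient is zero (i.e., C(k - 2^s(2^t-1), 2^s) is even or k < 2^s(2^t-1)) if and only if either k < 2^{s+t}, or k ≥ 2^{s+t} and the s-th binary digit of k is 1. -/
/-!
By Lucas's theorem `C(n, 2^s) ≡ ⌊n / 2^s⌋ (mod 2)`, so `C(n, 2^s)` is even exactly when bit `s`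
of `n` is `0`. For `k ≥ 2^(s+t) = 2^s (2^t - 1) + 2^s`, removing `2^s (2^t - 1)` from `k` removes
the odd number `2^t - 1` from `⌊k / 2^s⌋` and so flips bit `s`. For
`2^s (2^t - 1) ≤ k < 2^(s+t)` the top entry is below `2^s` and the binomial coefficient vanishes.
-/

namespace Nat

theorem choose_two_pow_mod_two (n s : ℕ) : n.choose (2 ^ s) % 2 = n / 2 ^ s % 2 := by
  induction s generalizing n with
  | zero => simp
  | succ s ih =>
    have : Fact (Nat.Prime 2) := ⟨Nat.prime_two⟩
    have lucas := Choose.choose_modEq_choose_mod_mul_choose_div_nat (n := n) (k := 2 * 2 ^ s) (p := 2)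
    rw [Nat.mul_mod_right, Nat.choose_zero_right, one_mul, Nat.mul_div_cancel_left _ two_pos]
      at lucas
    rw [pow_succ', lucas, ih, Nat.div_div_eq_div_mul]

theorem even_choose_two_pow_iff (n s : ℕ) : Even (n.choose (2 ^ s)) ↔ n.testBit s = false := by
  rw [Nat.even_iff, choose_two_pow_mod_two, Nat.testBit_eq_decide_div_mod_eq,
    decide_eq_false_iff_not]
  exact Nat.mod_two_ne_one.symm

theorem testBit_add_two_pow_mul_of_odd {m : ℕ} (hm : Odd m) (n s : ℕ) :
    (n + 2 ^ s * m).testBit s = !n.testBit s := by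
  rw [Nat.testBit_eq_decide_div_mod_eq, Nat.testBit_eq_decide_div_mod_eq,
    Nat.add_mul_div_left _ _ (Nat.two_pow_pos s), Nat.add_mod, Nat.odd_iff.mp hm]
  rcases Nat.mod_two_eq_zero_or_one (n / 2 ^ s) with h | h <;> simp [h]

theorem odd_two_pow_sub_one {t : ℕ} (ht : t ≠ 0) : Odd (2 ^ t - 1) :=
  Nat.Even.sub_odd Nat.one_le_two_pow ((Nat.even_pow' ht).mpr even_two) odd_one

end Nat

/-- the coefficient of b_k P_t^s is zero (i.e. k < 2^s(2^t-1) or the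
binomial coefficient is even) iff either k < 2^{s+t}, or k ≥ 2^{s+t} and the
s-th binary digit of k is 1. -/
theorem stmt1 (k s t : ℕ) (ht : 0 < t) :
    (k < 2^s * (2^t - 1) ∨ Even (Nat.choose (k - 2^s * (2^t - 1)) (2^s))) ↔
      (k < 2^(s+t) ∨ (2^(s+t) ≤ k ∧ k.testBit s = true)) := by
  have hsplit : 2 ^ (s + t) = 2 ^ s * (2 ^ t - 1) + 2 ^ s := by
    rw [Nat.mul_sub, mul_one, ← pow_add,
      Nat.sub_add_cancel (Nat.pow_le_pow_right two_pos (by omega))]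
  have hodd := Nat.odd_two_pow_sub_one ht.ne'
  rw [hsplit]
  generalize 2 ^ t - 1 = m at hodd ⊢
  rcases lt_or_ge k (2 ^ s * m + 2 ^ s) with hk | hk
  · refine iff_of_true ?_ (Or.inl hk)
    rcases lt_or_ge k (2 ^ s * m) with hkm | hkm
    · exact Or.inl hkm
    · rw [Nat.choose_eq_zero_of_lt (by omega)]
      exact Or.inr Even.zero
  · obtain ⟨a, rfl⟩ := Nat.exists_eq_add_of_le' (le_of_add_le_left hk)
    rw [Nat.add_sub_cancel, Nat.even_choose_two_pow_iff,
      Nat.testBit_add_two_pow_mul_of_odd hodd]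
    simp [hk]
end

section
/- Fix m ≥ 1, and for a natural number k write k + 1 = 2^κ(2ρ - 1) with ρ ≥ 1. Then for all s, t with s < m ≤ t, the condition 'k ≥ 2^{s+t} implies the s-th binary digit of k is 1' holds, if and only if either κ ≥ m, or (κ < m and ρ ≤ 2^{m-1}). -/
/-!
Write `k + 1 = 2^κ q` with `q = 2ρ - 1` odd. Then the binary digits of `k` below `κ` are all `1`
and digit `κ` is `0`, while `2^(κ+m) ≤ k` exactly when `2^(m-1) < ρ`. Digits `s < κ` never violate
the condition; a digit `s ≥ κ` with `s < m ≤ t` can only do so if `2^(κ+m) ≤ 2^(s+t) ≤ k`, and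
`s = κ, t = m` is then a violating pair.
-/

namespace Nat

theorem testBit_eq_decide_lt_of_succ_eq_two_pow_mul_odd {k κ q s : ℕ} (hq : Odd q)
    (hk : k + 1 = 2 ^ κ * q) (hs : s ≤ κ) : k.testBit s = decide (s < κ) := by
  obtain ⟨j, rfl⟩ := hq
  have hpos : 0 < 2 ^ κ := Nat.two_pow_pos κ
  have hk' : k = 2 ^ (κ + 1) * j + (2 ^ κ - 1) := by rw [pow_succ]; grind
  rw [hk', testBit_two_pow_mul_add _ (by rw [pow_succ]; omega), if_pos (by omega),
    testBit_two_pow_sub_one]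

theorem two_pow_add_le_iff_two_pow_pred_lt {k κ m ρ : ℕ} (hm : 0 < m)
    (hk : k + 1 = 2 ^ κ * (2 * ρ - 1)) : 2 ^ (κ + m) ≤ k ↔ 2 ^ (m - 1) < ρ := by
  have hpow : 2 ^ m = 2 * 2 ^ (m - 1) := by rw [← pow_succ']; congr 1; omega
  rw [show 2 ^ (κ + m) ≤ k ↔ 2 ^ κ * 2 ^ m < 2 ^ κ * (2 * ρ - 1) by rw [pow_add, ← hk]; omega,
    Nat.mul_lt_mul_left (Nat.two_pow_pos κ), hpow]
  omega

end Nat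

theorem stmt3_general (m k κ ρ : ℕ)
    (hk : k + 1 = 2^κ * (2 * ρ - 1)) :
    (∀ s t : ℕ, s < m → m ≤ t → (2^(s+t) ≤ k → k.testBit s = true)) ↔
      (m ≤ κ ∨ (κ < m ∧ ρ ≤ 2^(m-1))) := by
  have hρ : ρ ≠ 0 := by rintro rfl; simp at hk
  have hodd : Odd (2 * ρ - 1) := ⟨ρ - 1, by omega⟩
  have hbit {s : ℕ} (hs : s ≤ κ) : k.testBit s = decide (s < κ) :=
    Nat.testBit_eq_decide_lt_of_succ_eq_two_pow_mul_odd hodd hk hs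
  constructor
  · intro h
    by_contra! hfail
    obtain ⟨hκm, hρm⟩ := hfail
    have hle : 2 ^ (κ + m) ≤ k :=
      (Nat.two_pow_add_le_iff_two_pow_pred_lt (by omega) hk).2 (hρm hκm)
    simpa [hbit le_rfl] using h κ m hκm le_rfl hle
  · rintro hcond s t hsm hmt hle
    by_cases hsκ : s < κ
    · simp [hbit hsκ.le, hsκ]
    have hκm : κ < m := by omega
    have hlt : ¬ 2 ^ (κ + m) ≤ k :=
      (Nat.two_pow_add_le_iff_two_pow_pred_lt (by omega) hk).not.2 (by omega)
    have : 2 ^ (κ + m) ≤ 2 ^ (s + t) := Nat.pow_le_pow_right two_pos (by omega)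
    omega

/-- E(m)-annihilation criterion. With k+1 = 2^κ(2ρ-1), ρ ≥ 1:
(∀ s t, s < m ≤ t, k ≥ 2^{s+t} → bit s of k is 1) iff κ ≥ m or (κ < m and ρ ≤ 2^{m-1}). -/
theorem stmt3 (m k κ ρ : ℕ) (hm : 1 ≤ m) (hρ : 1 ≤ ρ)
    (hk : k + 1 = 2^κ * (2 * ρ - 1)) :
    (∀ s t : ℕ, s < m → m ≤ t → (2^(s+t) ≤ k → k.testBit s = true)) ↔
      (m ≤ κ ∨ (κ < m ∧ ρ ≤ 2^(m-1))) :=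
  stmt3_general m k κ ρ hk
end

section
/- For a natural number k, write k + 1 = 2^κ(2ρ - 1) with ρ ≥ 1. Then the following are equivalent: (a) for all pairs (s,t) with s < t, either k < 2^{s+t} or the s-th binary digit of k is 1; (b) ρ ≤ 2^κ. -/
/-!
Writing `ρ = q + 1`, we have `k = 2^(κ+1) q + (2^κ - 1)`: the bits of `k` below `κ` are all
`1` and bit `κ` is `0`. Hence only pairs with `s ≥ κ` matter, and among those the binding one
is `(s, t) = (κ, κ + 1)`, for which `k < 2^(2κ+1)` unwinds to `2ρ - 1 ≤ 2^(κ+1)`, i.e.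
`ρ ≤ 2^κ`.
-/

namespace Nat

variable {k κ q : ℕ}

lemma eq_two_pow_mul_add_of_succ_eq (hk : k + 1 = 2 ^ κ * (2 * q + 1)) :
    k = 2 ^ κ * (2 * q) + (2 ^ κ - 1) := by
  have := Nat.two_pow_pos κ
  rw [mul_add, mul_one] at hk
  omega

lemma testBit_of_lt_of_succ_eq (hk : k + 1 = 2 ^ κ * (2 * q + 1)) {s : ℕ} (hs : s < κ) :
    k.testBit s = true := by
  rw [eq_two_pow_mul_add_of_succ_eq hk,
    testBit_two_pow_mul_add _ (sub_one_lt (Nat.two_pow_pos κ).ne'), if_pos hs,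
    testBit_two_pow_sub_one, decide_eq_true hs]

lemma testBit_self_of_succ_eq (hk : k + 1 = 2 ^ κ * (2 * q + 1)) : k.testBit κ = false := by
  rw [eq_two_pow_mul_add_of_succ_eq hk,
    testBit_two_pow_mul_add _ (sub_one_lt (Nat.two_pow_pos κ).ne'), if_neg (lt_irrefl κ),
    Nat.sub_self, testBit_zero]
  simp

lemma lt_two_pow_iff_of_succ_eq (hk : k + 1 = 2 ^ κ * (2 * q + 1)) :
    k < 2 ^ (κ + (κ + 1)) ↔ q < 2 ^ κ := by
  rw [pow_add, ← add_one_le_iff, hk, Nat.mul_le_mul_left_iff (by positivity), pow_succ]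
  omega

end Nat

theorem stmt4_general (k κ ρ : ℕ) (hk : k + 1 = 2^κ * (2 * ρ - 1)) :
    (∀ s t : ℕ, s < t → (k < 2^(s+t) ∨ k.testBit s = true)) ↔ ρ ≤ 2^κ := by
  obtain ⟨q, rfl⟩ : ∃ q, ρ = q + 1 :=
    Nat.exists_eq_succ_of_ne_zero (by rintro rfl; simp at hk)
  replace hk : k + 1 = 2 ^ κ * (2 * q + 1) := by
    rwa [show 2 * (q + 1) - 1 = 2 * q + 1 by omega] at hk
  rw [Nat.add_one_le_iff, ← Nat.lt_two_pow_iff_of_succ_eq hk]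
  constructor
  · intro h
    simpa [Nat.testBit_self_of_succ_eq hk] using h κ (κ + 1) κ.lt_add_one
  · intro hlt s t hst
    rcases lt_or_ge s κ with hs | hs
    · exact .inr (Nat.testBit_of_lt_of_succ_eq hk hs)
    · exact .inl (hlt.trans_le (Nat.pow_le_pow_right two_pos (by omega)))

/-- D-annihilation criterion. With k+1 = 2^κ(2ρ-1), ρ ≥ 1:
(∀ s < t, k < 2^{s+t} or bit s of k is 1) iff ρ ≤ 2^κ. -/
theorem stmt4 (k κ ρ : ℕ) (hρ : 1 ≤ ρ) (hk : k + 1 = 2^κ * (2 * ρ - 1)) :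
    (∀ s t : ℕ, s < t → (k < 2^(s+t) ∨ k.testBit s = true)) ↔ ρ ≤ 2^κ :=
  stmt4_general k κ ρ hk
end

section
/- In the polynomial ring F_2[x_1, x_2, x_3, x_4] with the Steenrod algebra action, the monomial x_1^5 x_2^5 x_3^5 x_4^5 is hit, i.e., it lies in the image of the positive-degree Steenrod operations: x_1^5 x_2^5 x_3^5 x_4^5 ∈ Σ_{i>0} Sq^i(F_2[x_1,…,x_4]). -/
open MvPolynomial

/-- The action of the mod-2 Steenrod squares on F₂[x₁,…,xₙ]: F₂-linear operations
Sq i with Sq 0 = id, Sq 1 xᵢ = xᵢ², Sq k xᵢ = 0 for k ≥ 2, and the Cartan formula.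
These properties determine the action uniquely. -/
structure SteenrodAction (n : ℕ) where
  Sq : ℕ → MvPolynomial (Fin n) (ZMod 2) →ₗ[ZMod 2] MvPolynomial (Fin n) (ZMod 2)
  sq_zero : ∀ p, Sq 0 p = p
  sq_one_var : ∀ i, Sq 1 (X i) = X i ^ 2
  sq_var_eq_zero : ∀ i k, 2 ≤ k → Sq k (X i) = 0
  cartan : ∀ k u v, Sq k (u * v) = ∑ ij ∈ Finset.HasAntidiagonal.antidiagonal k, Sq ij.1 u * Sq ij.2 v

/-- `p` is hit: it lies in the span of the images of the positive-degree Steenrod operations. -/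
def SteenrodAction.IsHit {n : ℕ} (A : SteenrodAction n)
    (p : MvPolynomial (Fin n) (ZMod 2)) : Prop :=
  p ∈ Submodule.span (ZMod 2) {q | ∃ i, 0 < i ∧ ∃ u, q = A.Sq i u}

/-! Put `u = x₁x₂x₃x₄`. The Cartan formula together with `Sq²ʲ(v²) = (Sqʲ v)²`, `Sq⁴ u = u²` and
`Sqᵏ u = 0` for `k > 4` give `Sq⁸(u³) = u⁵ + Sq²u · (Sq³u)² + (u · Sq²u)²`. By the Adem relation
`Sq¹Sq³ = 0` the middle term equals `Sq²(u · (Sq³u)²)`, and the last one is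
`Sq¹(x₁ · (x₂x₃x₄ · Sq²u)²)` since `Sq¹(x w²) = x²w²`. -/

open Finset.HasAntidiagonal

namespace SteenrodAction

variable {n : ℕ} (A : SteenrodAction n)

theorem sq_pow_two (m : ℕ) (p : MvPolynomial (Fin n) (ZMod 2)) :
    A.Sq m (p ^ 2) = if Even m then A.Sq (m / 2) p ^ 2 else 0 := by
  rw [pow_two, A.cartan, ← Finset.sum_filter_add_sum_filter_not _ (fun x : ℕ × ℕ => x.1 ≠ x.2)]
  have off_diagonal : ∑ x ∈ (antidiagonal m).filter (fun x : ℕ × ℕ => x.1 ≠ x.2),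
      A.Sq x.1 p * A.Sq x.2 p = 0 :=
    Finset.sum_involution (fun x _ => x.swap)
      (fun x _ => by rw [Prod.fst_swap, Prod.snd_swap, mul_comm]; exact CharTwo.add_self_eq_zero _)
      (fun x hx _ h => (Finset.mem_filter.mp hx).2 (congrArg Prod.fst h).symm)
      (fun x hx => by
        simp only [Finset.mem_filter, mem_antidiagonal, Prod.fst_swap, Prod.snd_swap] at hx ⊢
        exact ⟨by omega, Ne.symm hx.2⟩)
      (fun x _ => x.swap_swap)
  rw [off_diagonal, zero_add]
  split_ifs with hm
  · rw [Nat.even_iff] at hm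
    refine (Finset.sum_eq_single_of_mem (m / 2, m / 2) ?_ fun x hx hne => absurd ?_ hne).trans
      (pow_two _).symm
    · simp only [Finset.mem_filter, mem_antidiagonal, not_not, and_true]
      omega
    · simp only [Finset.mem_filter, mem_antidiagonal, not_not] at hx
      ext <;> omega
  · refine Finset.sum_eq_zero fun x hx => absurd ?_ hm
    simp only [Finset.mem_filter, mem_antidiagonal, not_not] at hx
    exact ⟨x.1, by omega⟩

theorem sq_one_eq_zero {k : ℕ} (hk : 0 < k) : A.Sq k (1 : MvPolynomial (Fin n) (ZMod 2)) = 0 := by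
  induction k using Nat.strong_induction_on with
  | _ k ih =>
    rw [← one_pow 2, A.sq_pow_two]
    split_ifs with heven
    · obtain ⟨j, rfl⟩ := heven
      rw [ih ((j + j) / 2) (by omega) (by omega), zero_pow two_ne_zero]
    · rfl

theorem sq_C_of_pos {k : ℕ} (hk : 0 < k) (a : ZMod 2) : A.Sq k (C a) = 0 := by
  rw [C_eq_smul_one, map_smul, A.sq_one_eq_zero hk, smul_zero]

theorem sq_one_mul (p q : MvPolynomial (Fin n) (ZMod 2)) :
    A.Sq 1 (p * q) = A.Sq 1 p * q + p * A.Sq 1 q := by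
  simp [A.cartan, Finset.Nat.sum_antidiagonal_succ, A.sq_zero, add_comm]

theorem sq_one_mul_pow_two (p q : MvPolynomial (Fin n) (ZMod 2)) :
    A.Sq 1 (p * q ^ 2) = A.Sq 1 p * q ^ 2 := by
  simp [A.sq_one_mul, A.sq_pow_two]

theorem sq_succ_mul_X (k : ℕ) (p : MvPolynomial (Fin n) (ZMod 2)) (i : Fin n) :
    A.Sq (k + 1) (p * X i) = A.Sq (k + 1) p * X i + A.Sq k p * X i ^ 2 := by
  rw [A.cartan, Finset.Nat.sum_antidiagonal_succ', A.sq_zero,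
    Finset.sum_eq_single_of_mem (k, 0) (by simp), A.sq_one_var]
  rintro ⟨a, b⟩ hab hne
  rw [mem_antidiagonal] at hab
  have hb : b ≠ 0 := by
    rintro rfl
    exact hne (by rw [← hab, add_zero])
  rw [A.sq_var_eq_zero i _ (by omega), mul_zero]

theorem sq_one_sq (k : ℕ) (p : MvPolynomial (Fin n) (ZMod 2)) :
    A.Sq 1 (A.Sq k p) = ((k + 1 : ℕ) : ZMod 2) • A.Sq (k + 1) p := by
  induction p using MvPolynomial.induction_on generalizing k with
  | C a =>
    rcases k with _ | k
    · simp [A.sq_zero]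
    · simp [A.sq_C_of_pos]
  | add p q hp hq => simp only [map_add, hp, hq, smul_add]
  | mul_X p i ih =>
    rcases k with _ | k
    · simp [A.sq_zero]
    · rw [A.sq_succ_mul_X, map_add, A.sq_succ_mul_X, A.sq_one_mul_pow_two, ih, ih,
        A.sq_succ_mul_X, A.sq_zero]
      simp only [smul_mul_assoc]
      push_cast
      module

theorem sq_prod_X_of_card_lt (s : Finset (Fin n)) {k : ℕ} (hk : s.card < k) :
    A.Sq k (∏ i ∈ s, X i) = 0 := by
  induction s using Finset.induction_on generalizing k with
  | empty => simpa using A.sq_one_eq_zero hk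
  | insert a s ha ih =>
    obtain ⟨k, rfl⟩ := Nat.exists_eq_add_one_of_ne_zero (Nat.ne_zero_of_lt hk)
    rw [Finset.card_insert_of_notMem ha] at hk
    rw [Finset.prod_insert ha, mul_comm, A.sq_succ_mul_X, ih (by omega), ih (by omega),
      zero_mul, zero_mul, add_zero]

theorem sq_card_prod_X (s : Finset (Fin n)) :
    A.Sq s.card (∏ i ∈ s, X i) = (∏ i ∈ s, X i) ^ 2 := by
  induction s using Finset.induction_on with
  | empty => simp [A.sq_zero]
  | insert a s ha ih =>
    rw [Finset.card_insert_of_notMem ha, Finset.prod_insert ha, mul_comm, A.sq_succ_mul_X,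
      A.sq_prod_X_of_card_lt s (Nat.lt_succ_self _), ih]
    ring

theorem sq_two_mul_pow_two (u v : MvPolynomial (Fin n) (ZMod 2)) :
    A.Sq 2 (u * v ^ 2) = A.Sq 2 u * v ^ 2 + u * A.Sq 1 v ^ 2 := by
  simp [A.cartan, Finset.Nat.sum_antidiagonal_succ, A.sq_pow_two, A.sq_zero, add_comm]

theorem sq_eight_prod_X_pow_three (s : Finset (Fin n)) (hs : s.card = 4) :
    A.Sq 8 ((∏ i ∈ s, X i) ^ 3) = (∏ i ∈ s, X i) ^ 5 +
      A.Sq 2 (∏ i ∈ s, X i) * A.Sq 3 (∏ i ∈ s, X i) ^ 2 +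
      ((∏ i ∈ s, X i) * A.Sq 2 (∏ i ∈ s, X i)) ^ 2 := by
  have h4 := A.sq_card_prod_X s
  rw [hs] at h4
  have h6 := A.sq_prod_X_of_card_lt s (k := 6) (by omega)
  have h8 := A.sq_prod_X_of_card_lt s (k := 8) (by omega)
  rw [pow_succ', A.cartan]
  simp [Finset.Nat.sum_antidiagonal_eq_sum_range_succ_mk, Finset.sum_range_succ,
    A.sq_pow_two, Nat.even_iff, A.sq_zero, h4, h6, h8]
  ring

theorem isHit_sq {k : ℕ} (hk : 0 < k) (u : MvPolynomial (Fin n) (ZMod 2)) :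
    A.IsHit (A.Sq k u) :=
  Submodule.subset_span ⟨k, hk, u, rfl⟩

theorem isHit_X_mul_pow_two (i : Fin n) (b : MvPolynomial (Fin n) (ZMod 2)) :
    A.IsHit ((X i * b) ^ 2) := by
  rw [mul_pow, ← A.sq_one_var, ← A.sq_one_mul_pow_two]
  exact A.isHit_sq one_pos _

end SteenrodAction

/-- x₁⁵x₂⁵x₃⁵x₄⁵ is hit in F₂[x₁,x₂,x₃,x₄]. -/
theorem stmt10 (A : SteenrodAction 4) :
    A.IsHit (X 0 ^ 5 * X 1 ^ 5 * X 2 ^ 5 * X 3 ^ 5) := by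
  obtain ⟨u, hu⟩ : ∃ u : MvPolynomial (Fin 4) (ZMod 2), u = ∏ i, X i := ⟨_, rfl⟩
  have decomposition :
      u ^ 5 = A.Sq 8 (u ^ 3) + A.Sq 2 (u * A.Sq 3 u ^ 2) + (u * A.Sq 2 u) ^ 2 := by
    subst hu
    rw [A.sq_eight_prod_X_pow_three _ (by simp), A.sq_two_mul_pow_two, A.sq_one_sq,
      show ((3 + 1 : ℕ) : ZMod 2) = 0 by decide, zero_smul]
    linear_combination -(A.Sq 2 (∏ i, X i) * A.Sq 3 (∏ i, X i) ^ 2 +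
      ((∏ i, X i) * A.Sq 2 (∏ i, X i)) ^ 2) *
      CharTwo.two_eq_zero (R := MvPolynomial (Fin 4) (ZMod 2))
  rw [Fin.prod_univ_four] at hu
  have htarget : X 0 ^ 5 * X 1 ^ 5 * X 2 ^ 5 * X 3 ^ 5 = u ^ 5 := by rw [hu]; ring
  have hlast : u * A.Sq 2 u = X 0 * (X 1 * X 2 * X 3 * A.Sq 2 u) := by nth_rw 1 [hu]; ring
  rw [htarget, decomposition, hlast]
  exact add_mem (add_mem (A.isHit_sq (by norm_num) _) (A.isHit_sq (by norm_num) _))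
    (A.isHit_X_mul_pow_two 0 _)
end

section
/- Fix a > 1. For 1 ≤ i ≤ a-1, let k_i = 2^a(2·2^i - 1) - 1 and ℓ_i = 2^{a+i+1}(2·2^{a-i-1} - 1) - 1. Then k_i + ℓ_i = 2^{2a+1} - 2^a - 2 for every i (in particular k_i + ℓ_i is independent of i), and for each i, writing k_i + 1 = 2^{κ}(2ρ - 1) one has ρ ≤ 2^κ, and likewise for ℓ_i; i.e., both b_{k_i} and b_{ℓ_i} are D-annihilated. -/
/-- Uniqueness of the decomposition n = 2^κ (2ρ - 1). -/
lemma uniq2adic : ∀ κ c ρ m : ℕ, 1 ≤ ρ → 1 ≤ m →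
    2^κ * (2*ρ-1) = 2^c * (2*m-1) → κ = c ∧ ρ = m := by
  intro κ
  induction κ with
  | zero =>
    intro c ρ m hρ hm h
    cases c with
    | zero => simp at h; omega
    | succ c =>
      exfalso
      have hB : 1 ≤ 2^c * (2*m-1) := Nat.mul_pos (Nat.pow_pos (by norm_num)) (by omega)
      rw [pow_succ, mul_comm (2^c) 2, mul_assoc] at h
      simp at h
      omega
  | succ κ ih =>
    intro c ρ m hρ hm h
    cases c with
    | zero =>
      exfalso
      have hB : 1 ≤ 2^κ * (2*ρ-1) := Nat.mul_pos (Nat.pow_pos (by norm_num)) (by omega)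
      rw [pow_succ, mul_comm (2^κ) 2, mul_assoc] at h
      simp at h
      omega
    | succ c =>
      rw [pow_succ, pow_succ, mul_comm (2^κ) 2, mul_comm (2^c) 2, mul_assoc, mul_assoc] at h
      have h' := Nat.eq_of_mul_eq_mul_left (by norm_num : 0 < 2) h
      have := ih c ρ m hρ hm h'
      omega

/-- for a > 1 and 1 ≤ i ≤ a-1, with k_i = 2^a(2·2^i-1)-1 and
ℓ_i = 2^{a+i+1}(2·2^{a-i-1}-1)-1, the sum k_i + ℓ_i = 2^{2a+1} - 2^a - 2 is
independent of i, and both k_i and ℓ_i satisfy the D-annihilated criterion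
(ρ ≤ 2^κ where k+1 = 2^κ(2ρ-1)). -/
theorem stmt16 (a : ℕ) (ha : 1 < a) (i : ℕ) (hi1 : 1 ≤ i) (hi2 : i ≤ a - 1) :
    (2^a * (2 * 2^i - 1) - 1) + (2^(a+i+1) * (2 * 2^(a-i-1) - 1) - 1)
        = 2^(2*a+1) - 2^a - 2 ∧
    (∀ κ ρ : ℕ, 1 ≤ ρ → (2^a * (2 * 2^i - 1) - 1) + 1 = 2^κ * (2 * ρ - 1) → ρ ≤ 2^κ) ∧
    (∀ κ ρ : ℕ, 1 ≤ ρ → (2^(a+i+1) * (2 * 2^(a-i-1) - 1) - 1) + 1 = 2^κ * (2 * ρ - 1) →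
      ρ ≤ 2^κ) := by
  have hia : i + 1 ≤ a := by omega
  have hpi : 1 ≤ 2^i := Nat.one_le_two_pow
  have hpj : 1 ≤ 2^(a-i-1) := Nat.one_le_two_pow
  have hpa : 1 ≤ 2^a := Nat.one_le_two_pow
  have hP : 1 ≤ 2^a * (2 * 2^i - 1) := Nat.mul_pos (by omega) (by omega)
  have hQ : 1 ≤ 2^(a+i+1) * (2 * 2^(a-i-1) - 1) := Nat.mul_pos (Nat.pow_pos (by norm_num)) (by omega)
  -- key expansions
  have eP : 2^a * (2 * 2^i - 1) + 2^a = 2^(a+i+1) := by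
    have : 2 * 2^i - 1 + 1 = 2 * 2^i := by omega
    calc 2^a * (2 * 2^i - 1) + 2^a = 2^a * (2 * 2^i - 1 + 1) := by ring
      _ = 2^a * (2 * 2^i) := by rw [this]
      _ = 2^(a+i+1) := by rw [pow_add, pow_succ]; ring
  have eQ : 2^(a+i+1) * (2 * 2^(a-i-1) - 1) + 2^(a+i+1) = 2^(2*a+1) := by
    have h1 : 2 * 2^(a-i-1) - 1 + 1 = 2 * 2^(a-i-1) := by omega
    calc 2^(a+i+1) * (2 * 2^(a-i-1) - 1) + 2^(a+i+1)
        = 2^(a+i+1) * (2 * 2^(a-i-1) - 1 + 1) := by ring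
      _ = 2^(a+i+1) * (2 * 2^(a-i-1)) := by rw [h1]
      _ = 2 * (2^(a+i+1) * 2^(a-i-1)) := by ring
      _ = 2 * 2^(2*a) := by rw [← pow_add]; congr 2; omega
      _ = 2^(2*a+1) := by rw [pow_succ]; ring
  have hai1 : 2^(a+i+1) = 2^a * 2^i * 2 := by rw [pow_add, pow_succ, pow_add]; ring
  refine ⟨by omega, ?_, ?_⟩
  · intro κ ρ hρ h
    rw [Nat.sub_add_cancel hP] at h
    have hodd : 2^a * (2 * 2^i - 1) = 2^a * (2 * 2^i - 1) := rfl
    have := uniq2adic κ a ρ (2^i) hρ hpi h.symm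
    obtain ⟨hκ, hρ'⟩ := this
    subst hκ; subst hρ'
    exact Nat.pow_le_pow_right (by norm_num) (by omega)
  · intro κ ρ hρ h
    rw [Nat.sub_add_cancel hQ] at h
    have := uniq2adic κ (a+i+1) ρ (2^(a-i-1)) hρ hpj h.symm
    obtain ⟨hκ, hρ'⟩ := this
    subst hκ; subst hρ'
    exact Nat.pow_le_pow_right (by norm_num) (by omega)
end
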